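/- For every real number d > 0 and every λ > 0, (1 + 2d²λ²) · exp(d²λ²) · ∫_{dλ}^∞ exp(-t²) dt > dλ. Consequently, the function λ ↦ λ · exp(d²λ²) · ∫_{dλ}^∞ exp(-t²) dt is strictly increasing on (0, ∞). -/

import Mathlib

/-!
The auxiliary function `F t = -t e^{-t²} / (1 + 2t²)` satisfies
`F' t = e^{-t²} (4t⁴ + 4t² - 1) / (1 + 2t²)² < e^{-t²}` and `F t → 0` as `t → ∞`, so
`x e^{-x²} / (1 + 2x²) = ∫_x^∞ F' < ∫_x^∞ e^{-t²}`. This is exactly the positivity of the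
derivative `(1 + 2d²λ²) e^{d²λ²} ∫_{dλ}^∞ e^{-t²} dt - dλ` of `λ ↦ λ e^{d²λ²} ∫_{dλ}^∞ e^{-t²} dt`.
-/

open MeasureTheory Set Filter Topology Real

theorem setIntegral_lt_setIntegral_of_forall_lt {X : Type*} [MeasurableSpace X] {μ : Measure X}
    {s : Set X} {f g : X → ℝ} (hs : MeasurableSet s) (hμs : μ s ≠ 0)
    (hf : IntegrableOn f s μ) (hg : IntegrableOn g s μ) (hlt : ∀ x ∈ s, f x < g x) :
    ∫ x in s, f x ∂μ < ∫ x in s, g x ∂μ := by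
  rw [← sub_pos, ← integral_sub hg hf]
  have hsupp : Function.support (fun x => g x - f x) ∩ s = s :=
    inter_eq_right.2 fun x hx => (sub_pos.2 (hlt x hx)).ne'
  rw [setIntegral_pos_iff_support_of_nonneg_ae
    ((ae_restrict_iff' hs).2 (Eventually.of_forall fun x hx => (sub_pos.2 (hlt x hx)).le))
    (hg.sub hf), hsupp]
  exact pos_iff_ne_zero.2 hμs

theorem hasDerivAt_integral_Ioi {f : ℝ → ℝ} {x : ℝ} (hfi : Integrable f) (hf : ContinuousAt f x) :
    HasDerivAt (fun y => ∫ t in Ioi y, f t) (-f x) x := by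
  have hsplit : (fun y => ∫ t in Ioi y, f t) = fun y => (∫ t in Ioi x, f t) - ∫ t in x..y, f t := by
    ext y
    rw [← intervalIntegral.integral_Ioi_sub_Ioi' hfi.integrableOn hfi.integrableOn, sub_sub_cancel]
  rw [hsplit]
  exact (intervalIntegral.integral_hasDerivAt_right hfi.intervalIntegrable
    hfi.aestronglyMeasurable.stronglyMeasurableAtFilter hf).const_sub _

theorem integrable_exp_neg_sq : Integrable fun t : ℝ => exp (-t ^ 2) := by
  simpa using integrable_exp_neg_mul_sq one_pos

theorem hasDerivAt_neg_mul_exp_neg_sq_div (t : ℝ) :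
    HasDerivAt (fun t => -t * exp (-t ^ 2) / (1 + 2 * t ^ 2))
      (exp (-t ^ 2) * (4 * t ^ 2 + 4 * t ^ 4 - 1) / (1 + 2 * t ^ 2) ^ 2) t := by
  have hexp : HasDerivAt (fun t => exp (-t ^ 2)) (exp (-t ^ 2) * -(2 * t)) t := by
    simpa using (hasDerivAt_pow 2 t).neg.exp
  have hden : HasDerivAt (fun t => 1 + 2 * t ^ 2) (2 * (2 * t)) t := by
    simpa using ((hasDerivAt_pow 2 t).const_mul 2).const_add 1
  refine (((hasDerivAt_id' t).fun_neg.fun_mul hexp).fun_div hden (by positivity)).congr_deriv ?_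
  ring

theorem abs_neg_mul_exp_neg_sq_div_le (t : ℝ) :
    |-t * exp (-t ^ 2) / (1 + 2 * t ^ 2)| ≤ exp (-t ^ 2) := by
  rw [abs_div, abs_mul, abs_neg, abs_exp, abs_of_pos (by positivity : (0 : ℝ) < 1 + 2 * t ^ 2),
    div_le_iff₀ (by positivity)]
  have : |t| ≤ 1 + 2 * t ^ 2 := by
    cases abs_cases t <;> nlinarith [sq_nonneg (t - 1), sq_nonneg (t + 1)]
  nlinarith [exp_pos (-t ^ 2)]

theorem tendsto_neg_mul_exp_neg_sq_div :
    Tendsto (fun t => -t * exp (-t ^ 2) / (1 + 2 * t ^ 2)) atTop (𝓝 0) := by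
  have hexp : Tendsto (fun t : ℝ => exp (-t ^ 2)) atTop (𝓝 0) :=
    tendsto_exp_atBot.comp (tendsto_neg_atTop_atBot.comp (tendsto_pow_atTop two_ne_zero))
  exact squeeze_zero_norm (fun t => abs_neg_mul_exp_neg_sq_div_le t) hexp

theorem abs_exp_neg_sq_mul_div_le (t : ℝ) :
    |exp (-t ^ 2) * (4 * t ^ 2 + 4 * t ^ 4 - 1) / (1 + 2 * t ^ 2) ^ 2| ≤ exp (-t ^ 2) := by
  have hden : (0 : ℝ) < (1 + 2 * t ^ 2) ^ 2 := by positivity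
  rw [abs_div, abs_mul, abs_exp, abs_of_pos hden, div_le_iff₀ hden]
  have : |4 * t ^ 2 + 4 * t ^ 4 - 1| ≤ (1 + 2 * t ^ 2) ^ 2 := by
    rw [abs_le]; constructor <;> nlinarith [sq_nonneg t, sq_nonneg (t ^ 2)]
  exact mul_le_mul_of_nonneg_left this (exp_pos _).le

theorem exp_neg_sq_mul_div_lt (t : ℝ) :
    exp (-t ^ 2) * (4 * t ^ 2 + 4 * t ^ 4 - 1) / (1 + 2 * t ^ 2) ^ 2 < exp (-t ^ 2) := by
  rw [div_lt_iff₀ (by positivity)]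
  nlinarith [exp_pos (-t ^ 2), sq_nonneg t]

theorem mul_exp_neg_sq_div_lt_integral_Ioi (x : ℝ) :
    x * exp (-x ^ 2) / (1 + 2 * x ^ 2) < ∫ t in Ioi x, exp (-t ^ 2) := by
  have hderiv_int : IntegrableOn
      (fun t => exp (-t ^ 2) * (4 * t ^ 2 + 4 * t ^ 4 - 1) / (1 + 2 * t ^ 2) ^ 2) (Ioi x) :=
    (integrable_exp_neg_sq.mono
      ((Continuous.div (by fun_prop) (by fun_prop) fun t => by positivity).aestronglyMeasurable)
      (Eventually.of_forall fun t => by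
        rw [norm_eq_abs, norm_eq_abs, abs_exp]; exact abs_exp_neg_sq_mul_div_le t)).integrableOn
  have hftc := integral_Ioi_of_hasDerivAt_of_tendsto
    (hasDerivAt_neg_mul_exp_neg_sq_div x).continuousAt.continuousWithinAt
    (fun t _ => hasDerivAt_neg_mul_exp_neg_sq_div t) hderiv_int tendsto_neg_mul_exp_neg_sq_div
  calc x * exp (-x ^ 2) / (1 + 2 * x ^ 2)
      = ∫ t in Ioi x, exp (-t ^ 2) * (4 * t ^ 2 + 4 * t ^ 4 - 1) / (1 + 2 * t ^ 2) ^ 2 := by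
        rw [hftc]; ring
    _ < ∫ t in Ioi x, exp (-t ^ 2) :=
        setIntegral_lt_setIntegral_of_forall_lt measurableSet_Ioi (by simp) hderiv_int
          integrable_exp_neg_sq.integrableOn fun t _ => exp_neg_sq_mul_div_lt t

theorem lt_one_add_two_mul_sq_mul_exp_sq_mul_integral_Ioi (x : ℝ) :
    x < (1 + 2 * x ^ 2) * exp (x ^ 2) * ∫ t in Ioi x, exp (-t ^ 2) := by
  have hpos : 0 < (1 + 2 * x ^ 2) * exp (x ^ 2) := by positivity
  calc x = (1 + 2 * x ^ 2) * exp (x ^ 2) * (x * exp (-x ^ 2) / (1 + 2 * x ^ 2)) := by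
        rw [exp_neg]; field_simp
    _ < _ := mul_lt_mul_of_pos_left (mul_exp_neg_sq_div_lt_integral_Ioi x) hpos

theorem hasDerivAt_mul_exp_mul_integral_Ioi (d lam : ℝ) :
    HasDerivAt (fun lam => lam * exp (d ^ 2 * lam ^ 2) * ∫ t in Ioi (d * lam), exp (-t ^ 2))
      ((1 + 2 * d ^ 2 * lam ^ 2) * exp (d ^ 2 * lam ^ 2) * (∫ t in Ioi (d * lam), exp (-t ^ 2))
        - d * lam) lam := by
  have hexp : HasDerivAt (fun lam => exp (d ^ 2 * lam ^ 2))
      (exp (d ^ 2 * lam ^ 2) * (d ^ 2 * (2 * lam))) lam := by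
    simpa using ((hasDerivAt_pow 2 lam).const_mul (d ^ 2)).exp
  have htail : HasDerivAt (fun lam => ∫ t in Ioi (d * lam), exp (-t ^ 2))
      (-exp (-(d * lam) ^ 2) * (d * 1)) lam :=
    (hasDerivAt_integral_Ioi integrable_exp_neg_sq (by fun_prop)).comp lam
      ((hasDerivAt_id' lam).const_mul d)
  refine (((hasDerivAt_id' lam).fun_mul hexp).fun_mul htail).congr_deriv ?_
  have hcancel : exp (d ^ 2 * lam ^ 2) * exp (-(d * lam) ^ 2) = 1 := by
    rw [← exp_add, mul_pow, add_neg_cancel, exp_zero]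
  linear_combination -(d * lam) * hcancel

theorem stmt_12_general (d : ℝ) :
    (∀ lam : ℝ, 0 < lam →
      d * lam < (1 + 2 * d ^ 2 * lam ^ 2) * Real.exp (d ^ 2 * lam ^ 2) *
        ∫ t in Set.Ioi (d * lam), Real.exp (-t ^ 2)) ∧
    StrictMonoOn (fun lam : ℝ => lam * Real.exp (d ^ 2 * lam ^ 2) *
        ∫ t in Set.Ioi (d * lam), Real.exp (-t ^ 2)) (Set.Ioi 0) := by
  have hineq : ∀ lam : ℝ, d * lam < (1 + 2 * d ^ 2 * lam ^ 2) * exp (d ^ 2 * lam ^ 2) *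
      ∫ t in Ioi (d * lam), exp (-t ^ 2) := fun lam =>
    (lt_one_add_two_mul_sq_mul_exp_sq_mul_integral_Ioi (d * lam)).trans_eq (by rw [mul_pow]; ring)
  refine ⟨fun lam _ => hineq lam, StrictMono.strictMonoOn ?_ _⟩
  exact strictMono_of_hasDerivAt_pos (hasDerivAt_mul_exp_mul_integral_Ioi d)
    fun lam => sub_pos.2 (hineq lam)

/-- For `d > 0` and `λ > 0`,
`(1 + 2d²λ²) exp(d²λ²) ∫_{dλ}^∞ exp(-t²) dt > dλ`; consequently
`λ ↦ λ exp(d²λ²) ∫_{dλ}^∞ exp(-t²) dt` is strictly increasing on `(0, ∞)`. -/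
theorem stmt_12 (d : ℝ) (hd : 0 < d) :
    (∀ lam : ℝ, 0 < lam →
      d * lam < (1 + 2 * d ^ 2 * lam ^ 2) * Real.exp (d ^ 2 * lam ^ 2) *
        ∫ t in Set.Ioi (d * lam), Real.exp (-t ^ 2)) ∧
    StrictMonoOn (fun lam : ℝ => lam * Real.exp (d ^ 2 * lam ^ 2) *
        ∫ t in Set.Ioi (d * lam), Real.exp (-t ^ 2)) (Set.Ioi 0) :=
  stmt_12_general d
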